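/- arXiv:1401.5549 — 2 statements merged into one kernel-verified Lean document; each statement's English description precedes it below -/
import Mathlib

section
/- Let M be a complete Riemannian manifold, p, q ∈ M, and x₀ ∈ C_p a minimum point on C_p of F_{p;q}(x) = d(p,x) + d(q,x). Then for any point q₁ on a minimal geodesic from q to x₀ (i.e., any q₁ with d(q,q₁) + d(q₁,x₀) = d(q,x₀)), the point x₀ is also a minimum point on C_p of F_{p;q₁}(x) = d(p,x) + d(q₁,x). -/
open Set Metric Manifold Function ENNReal

noncomputable section

/-- Bundled data of a complete Riemannian `n`-manifold: the underlying smooth manifold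
with its geodesic distance, together with the exponential maps, cut loci,
tangential segment domains, the conjugacy relation along geodesics, lower sectional
curvature bounds and the Riemannian volume, satisfying the standard structural facts
used in the paper. -/
structure RiemannianManifold (n : ℕ) where
  M : Type
  [metM : MetricSpace M]
  [chartedM : ChartedSpace (EuclideanSpace ℝ (Fin n)) M]
  [smoothM : IsManifold (𝓡 n) (⊤ : ℕ∞) M]
  complete : CompleteSpace M
  /-- the exponential map based at a point; the tangent space is modelled on `ℝⁿ`. -/
  exp : M → EuclideanSpace ℝ (Fin n) → M
  /-- the cut locus `C_p` of a point `p` -/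
  cutLocus : M → Set M
  /-- the tangential segment domain `D̃_p ⊆ T_pM`, the maximal open star-shaped
  domain about the origin on which `exp_p` is injective -/
  segDomain : M → Set (EuclideanSpace ℝ (Fin n))
  /-- `ConjugateAlong p x γ` : `p` and `x` are conjugate along the minimal geodesic `γ`
  from `p` to `x` (i.e. `d(exp_p)` is singular at the corresponding tangent vector) -/
  ConjugateAlong : M → M → (ℝ → M) → Prop
  /-- `SecCurvGE k` : the sectional curvature of `M` is everywhere `≥ k` -/
  SecCurvGE : ℝ → Prop
  /-- the Riemannian volume of `M` -/
  vol : ℝ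
  cutLocus_closed : ∀ p, IsClosed (cutLocus p)
  segDomain_open : ∀ p, IsOpen (segDomain p)
  exp_injOn : ∀ p, Set.InjOn (exp p) (segDomain p)
  exp_segDomain : ∀ p, exp p '' segDomain p = (cutLocus p)ᶜ
  dist_exp : ∀ p v, v ∈ segDomain p → dist p (exp p v) = ‖v‖

attribute [instance] RiemannianManifold.metM RiemannianManifold.chartedM
  RiemannianManifold.smoothM

namespace RiemannianManifold

variable {n : ℕ} (R : RiemannianManifold n)

/-- `γ` is a minimal geodesic from `a` to `b`, parametrized by arclength
on `[0, dist a b]`. -/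
def IsMinGeodesic (γ : ℝ → R.M) (a b : R.M) : Prop :=
  γ 0 = a ∧ γ (dist a b) = b ∧
    ∀ s ∈ Icc (0:ℝ) (dist a b), ∀ t ∈ Icc (0:ℝ) (dist a b),
      dist (γ s) (γ t) = |s - t|

/-- `γ` is a (unit-speed, locally minimizing) geodesic on `[0, l]`. -/
def IsGeodesicOn (γ : ℝ → R.M) (l : ℝ) : Prop :=
  ∀ t ∈ Icc (0:ℝ) l, ∃ ε > 0, ∀ s₁ ∈ Icc (0:ℝ) l, ∀ s₂ ∈ Icc (0:ℝ) l,
    |s₁ - t| < ε → |s₂ - t| < ε → dist (γ s₁) (γ s₂) = |s₁ - s₂|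

/-- `γ : ℝ → M` is a complete (unit-speed, locally minimizing) geodesic. -/
def IsGeodesicLine (γ : ℝ → R.M) : Prop :=
  ∀ t : ℝ, ∃ ε > 0, ∀ s₁ s₂ : ℝ, |s₁ - t| < ε → |s₂ - t| < ε →
    dist (γ s₁) (γ s₂) = |s₁ - s₂|

/-- The concatenation of `α : [0,a] → M` (from `p` to `x₀`) with the reversal of
`γ : [0,b] → M` (from `q` to `x₀`), a curve on `[0, a+b]` from `p` through `x₀` to `q`. -/
def concat (α γ : ℝ → R.M) (a b : ℝ) : ℝ → R.M :=
  fun t => if t ≤ a then α t else γ (a + b - t)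

/-- `α : [0,a] → M` and `γ : [0,b] → M`, both ending at a common point `x₀`, fit
together as one smooth geodesic through `x₀`. -/
def FormWholeGeodesic (α γ : ℝ → R.M) (a b : ℝ) : Prop :=
  R.IsGeodesicOn (R.concat α γ a b) (a + b)

/-- `x` is an essential conjugate point of `p` : a cut point of `p` such that `p` is
conjugate to `x` along every minimal geodesic connecting them. -/
def EssentialConjugate (p x : R.M) : Prop :=
  x ∈ R.cutLocus p ∧ ∀ γ : ℝ → R.M, R.IsMinGeodesic γ p x → R.ConjugateAlong p x γ

/-- the essential conjugate radius of `p`: the distance from `p` to its set of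
essential conjugate points (`∞` if there are none). -/
def essConjRad (p : R.M) : ℝ≥0∞ :=
  ⨅ x ∈ {x | R.EssentialConjugate p x}, edist p x

/-- the injectivity radius at `p`, i.e. the distance from `p` to its cut locus
(`∞` if the cut locus is empty). -/
def injRad (p : R.M) : ℝ≥0∞ := ⨅ x ∈ R.cutLocus p, edist p x

/-- the set of lengths of geodesic loops at `p`. -/
def loopLengths (p : R.M) : Set ℝ :=
  {l | 0 < l ∧ ∃ γ : ℝ → R.M, R.IsGeodesicOn γ l ∧ γ 0 = p ∧ γ l = p}

/-- the length of the shortest geodesic loop at `p` (`∞` if there are none). -/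
def shortestLoop (p : R.M) : ℝ≥0∞ := ⨅ l ∈ R.loopLengths p, ENNReal.ofReal l

/-- the set of lengths of smooth closed geodesics in `M`. -/
def closedGeodesicLengths : Set ℝ :=
  {l | 0 < l ∧ ∃ γ : ℝ → R.M, R.IsGeodesicLine γ ∧ Function.Periodic γ l}

/-- the length of the shortest closed geodesic in `M` (`∞` if there are none). -/
def shortestClosedGeodesic : ℝ≥0∞ :=
  ⨅ l ∈ R.closedGeodesicLengths, ENNReal.ofReal l

/-- the injectivity radius of `M`. -/
def injRadM : ℝ≥0∞ := ⨅ p : R.M, R.injRad p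

/-- the essential conjugate radius of `M`. -/
def essConjRadM : ℝ≥0∞ := ⨅ p : R.M, R.essConjRad p

end RiemannianManifold

theorem IsMinOn.add_dist_of_dist_add_dist_eq {X : Type*} [PseudoMetricSpace X]
    {f : X → ℝ} {s : Set X} {q q₁ x₀ : X}
    (hmin : IsMinOn (fun x => f x + dist q x) s x₀)
    (h : dist q q₁ + dist q₁ x₀ = dist q x₀) :
    IsMinOn (fun x => f x + dist q₁ x) s x₀ :=
  isMinOn_iff.mpr fun x hx =>
    calc f x₀ + dist q₁ x₀ = f x₀ + dist q x₀ - dist q q₁ := by linarith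
      _ ≤ f x + dist q x - dist q q₁ := sub_le_sub_right (hmin hx) _
      _ ≤ f x + dist q₁ x := by linarith [dist_triangle q q₁ x]

theorem min_point_stable_along_geodesic_general {n : ℕ} (R : RiemannianManifold n)
    (p q q₁ x₀ : R.M)
    (hmin : ∀ y ∈ R.cutLocus p, dist p x₀ + dist q x₀ ≤ dist p y + dist q y)
    (hq₁ : dist q q₁ + dist q₁ x₀ = dist q x₀) :
    ∀ y ∈ R.cutLocus p, dist p x₀ + dist q₁ x₀ ≤ dist p y + dist q₁ y :=
  isMinOn_iff.mp ((isMinOn_iff.mpr hmin).add_dist_of_dist_add_dist_eq hq₁)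

/-- if `x₀` minimizes `F_{p;q}` on `C_p` and `q₁` lies on a minimal
geodesic from `q` to `x₀`, then `x₀` also minimizes `F_{p;q₁}` on `C_p`. -/
theorem min_point_stable_along_geodesic {n : ℕ} (R : RiemannianManifold n)
    (p q q₁ x₀ : R.M) (hx₀ : x₀ ∈ R.cutLocus p)
    (hmin : ∀ y ∈ R.cutLocus p, dist p x₀ + dist q x₀ ≤ dist p y + dist q y)
    (hq₁ : dist q q₁ + dist q₁ x₀ = dist q x₀) :
    ∀ y ∈ R.cutLocus p, dist p x₀ + dist q₁ x₀ ≤ dist p y + dist q₁ y :=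
  min_point_stable_along_geodesic_general R p q q₁ x₀ hmin hq₁
end
end

section
/- Strict decrease along broken geodesics: let M be a complete Riemannian manifold, p ∈ M, x₀ ∈ C_p, q ∈ M, and suppose a minimal geodesic γ from q to x₀ and a minimal geodesic α from p to x₀ do not fit together as a smooth geodesic at x₀. Then for every interior point y = α(s), 0 < s < d(p,x₀), one has d(p,y) + d(q,y) < d(p,x₀) + d(q,x₀). -/
open Set Metric Manifold Function ENNReal

noncomputable section

/-! Since `α s` lies on the minimal geodesic `α`, the triangle inequality through `x₀` gives
`d(q, α s) ≤ d(q, x₀) + d(p, x₀) - s`, so only equality has to be ruled out. This is the metric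
substitute for the first variation formula: under equality, `α` on `[s, d(p,x₀)]` and the reversal
of `γ` glue to a distance-preserving segment, which overlaps `α` on an interval of positive length,
so the concatenation is locally distance-preserving through `x₀`, i.e. a geodesic. -/

def IsometricOn {X : Type*} [PseudoMetricSpace X] (f : ℝ → X) (S : Set ℝ) : Prop :=
  ∀ s ∈ S, ∀ t ∈ S, dist (f s) (f t) = |s - t|

namespace IsometricOn

variable {X : Type*} [PseudoMetricSpace X] {f g : ℝ → X} {S T : Set ℝ}

theorem mono (hf : IsometricOn f T) (hST : S ⊆ T) : IsometricOn f S :=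
  fun s hs t ht => hf s (hST hs) t (hST ht)

theorem congr (hf : IsometricOn f S) (hfg : EqOn f g S) : IsometricOn g S := by
  intro s hs t ht
  rw [← hfg hs, ← hfg ht, hf s hs t ht]

theorem dist_eq_sub (hf : IsometricOn f S) {s t : ℝ} (hs : s ∈ S) (ht : t ∈ S) (hst : s ≤ t) :
    dist (f s) (f t) = t - s := by
  rw [hf s hs t ht, abs_sub_comm, abs_of_nonneg (sub_nonneg.2 hst)]

theorem comp_const_sub {a b c : ℝ} (hf : IsometricOn f (Icc a b)) :
    IsometricOn (fun t => f (c - t)) (Icc (c - b) (c - a)) := by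
  intro s hs t ht
  rw [hf (c - s) ⟨by linarith [hs.2], by linarith [hs.1]⟩ (c - t)
    ⟨by linarith [ht.2], by linarith [ht.1]⟩, ← abs_neg]
  ring_nf

theorem Icc_union {a b c : ℝ} (hab : IsometricOn f (Icc a b)) (hbc : IsometricOn f (Icc b c))
    (hac : dist (f a) (f c) = c - a) : IsometricOn f (Icc a c) := by
  suffices key : ∀ u ∈ Icc a c, ∀ v ∈ Icc a c, u ≤ v → dist (f u) (f v) = v - u by
    intro u hu v hv
    rcases le_total u v with huv | hvu
    · rw [key u hu v hv huv, abs_sub_comm, abs_of_nonneg (sub_nonneg.2 huv)]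
    · rw [dist_comm, key v hv u hu hvu, abs_of_nonneg (sub_nonneg.2 hvu)]
  intro u hu v hv huv
  rcases le_total v b with hvb | hbv
  · exact hab.dist_eq_sub ⟨hu.1, huv.trans hvb⟩ ⟨hu.1.trans huv, hvb⟩ huv
  rcases le_total b u with hbu | hub
  · exact hbc.dist_eq_sub ⟨hbu, hu.2⟩ ⟨hbu.trans huv, hv.2⟩ huv
  have hb : b ∈ Icc a c := ⟨hu.1.trans hub, hbv.trans hv.2⟩
  have hau := hab.dist_eq_sub ⟨le_rfl, hb.1⟩ ⟨hu.1, hub⟩ hu.1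
  have hub' := hab.dist_eq_sub ⟨hu.1, hub⟩ ⟨hb.1, le_rfl⟩ hub
  have hbv' := hbc.dist_eq_sub ⟨le_rfl, hb.2⟩ ⟨hbv, hv.2⟩ hbv
  have hvc := hbc.dist_eq_sub ⟨hbv, hv.2⟩ ⟨hb.2, le_rfl⟩ hv.2
  have hupper := dist_triangle (f u) (f b) (f v)
  have hlower := dist_triangle4 (f a) (f u) (f v) (f c)
  linarith

end IsometricOn

namespace RiemannianManifold

variable {n : ℕ} (R : RiemannianManifold n)

variable {R} in
theorem IsMinGeodesic.isometricOn {γ : ℝ → R.M} {a b : R.M} (hγ : R.IsMinGeodesic γ a b) :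
    IsometricOn γ (Icc 0 (dist a b)) :=
  hγ.2.2

variable {R} in
theorem IsMinGeodesic.dist_left {γ : ℝ → R.M} {a b : R.M} (hγ : R.IsMinGeodesic γ a b) {s : ℝ}
    (hs : s ∈ Icc 0 (dist a b)) : dist a (γ s) = s := by
  rw [← hγ.1, hγ.isometricOn.dist_eq_sub ⟨le_rfl, dist_nonneg⟩ hs hs.1, sub_zero]

variable {R} in
theorem IsMinGeodesic.dist_right {γ : ℝ → R.M} {a b : R.M} (hγ : R.IsMinGeodesic γ a b) {s : ℝ}
    (hs : s ∈ Icc 0 (dist a b)) : dist (γ s) b = dist a b - s := by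
  conv_lhs => rw [← hγ.2.1]
  exact hγ.isometricOn.dist_eq_sub hs ⟨dist_nonneg, le_rfl⟩ hs.2

theorem concat_eqOn_left (α γ : ℝ → R.M) (a b : ℝ) : EqOn (R.concat α γ a b) α (Iic a) :=
  fun _ ht => if_pos ht

theorem concat_eqOn_right {α γ : ℝ → R.M} {a b : ℝ} (hαγ : α a = γ b) :
    EqOn (R.concat α γ a b) (fun t => γ (a + b - t)) (Ici a) := by
  intro t ht
  rcases (mem_Ici.1 ht).eq_or_lt with rfl | hlt
  · simp [concat, hαγ]
  · exact if_neg (not_le.2 hlt)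

theorem isGeodesicOn_of_isometricOn_Icc {f : ℝ → R.M} {s c l : ℝ}
    (h₁ : IsometricOn f (Icc 0 c)) (h₂ : IsometricOn f (Icc s l)) (hsc : s < c) :
    R.IsGeodesicOn f l := by
  intro t ht
  rcases lt_or_ge t c with htc | hct
  · refine ⟨c - t, sub_pos.2 htc, fun s₁ hs₁ s₂ hs₂ h₁' h₂' => h₁ s₁ ?_ s₂ ?_⟩
    · exact ⟨hs₁.1, by linarith [(abs_lt.1 h₁').2]⟩
    · exact ⟨hs₂.1, by linarith [(abs_lt.1 h₂').2]⟩
  · refine ⟨t - s, by linarith, fun s₁ hs₁ s₂ hs₂ h₁' h₂' => h₂ s₁ ?_ s₂ ?_⟩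
    · exact ⟨by linarith [(abs_lt.1 h₁').1], hs₁.2⟩
    · exact ⟨by linarith [(abs_lt.1 h₂').1], hs₂.2⟩

theorem formWholeGeodesic_of_dist_eq {p q x₀ : R.M} {α γ : ℝ → R.M}
    (hα : R.IsMinGeodesic α p x₀) (hγ : R.IsMinGeodesic γ q x₀) {s : ℝ}
    (hs : s ∈ Ioo 0 (dist p x₀)) (hdist : dist (α s) q = dist p x₀ + dist q x₀ - s) :
    R.FormWholeGeodesic α γ (dist p x₀) (dist q x₀) := by
  set a := dist p x₀
  set b := dist q x₀
  have hαγ : α a = γ b := hα.2.1.trans hγ.2.1.symm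
  have hleft : IsometricOn (R.concat α γ a b) (Icc 0 a) :=
    hα.isometricOn.congr fun t ht => (R.concat_eqOn_left α γ a b ht.2).symm
  have hright : IsometricOn (R.concat α γ a b) (Icc a (a + b)) := by
    have hrev := hγ.isometricOn.comp_const_sub (c := a + b)
    change IsometricOn _ (Icc (a + b - b) (a + b - 0)) at hrev
    rw [add_sub_cancel_right, sub_zero] at hrev
    exact hrev.congr fun t ht => (R.concat_eqOn_right hαγ ht.1).symm
  have hends : dist (R.concat α γ a b s) (R.concat α γ a b (a + b)) = a + b - s := by
    rw [R.concat_eqOn_left α γ a b hs.2.le, R.concat_eqOn_right hαγ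
      (le_add_of_nonneg_right dist_nonneg)]
    change dist (α s) (γ (a + b - (a + b))) = _
    rw [sub_self, hγ.1, hdist]
  exact R.isGeodesicOn_of_isometricOn_Icc hleft
    ((hleft.mono (Icc_subset_Icc_left hs.1.le)).Icc_union hright hends) hs.2

end RiemannianManifold

theorem strict_decrease_broken_general {n : ℕ} (R : RiemannianManifold n) (p q x₀ : R.M)
    (γ : ℝ → R.M) (hγ : R.IsMinGeodesic γ q x₀)
    (α : ℝ → R.M) (hα : R.IsMinGeodesic α p x₀)
    (hbroken : ¬ R.FormWholeGeodesic α γ (dist p x₀) (dist q x₀)) :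
    ∀ s ∈ Set.Ioo (0:ℝ) (dist p x₀),
      dist p (α s) + dist q (α s) < dist p x₀ + dist q x₀ := by
  intro s hs
  have hs' : s ∈ Icc 0 (dist p x₀) := Ioo_subset_Icc_self hs
  have hps : dist p (α s) = s := hα.dist_left hs'
  have hsx : dist (α s) x₀ = dist p x₀ - s := hα.dist_right hs'
  have hle : dist (α s) q ≤ dist p x₀ + dist q x₀ - s := by
    linarith [dist_triangle (α s) x₀ q, dist_comm x₀ q]
  refine lt_of_le_of_ne (by linarith [dist_comm q (α s)]) fun hsum => hbroken ?_
  exact R.formWholeGeodesic_of_dist_eq hα hγ hs (by linarith [dist_comm q (α s)])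

/-- if the minimal geodesics `γ` (from `q` to `x₀ ∈ C_p`) and `α`
(from `p` to `x₀`) do not fit together as a smooth geodesic at `x₀`, then
`d(p,·) + d(q,·)` is strictly smaller than its value at `x₀` at every interior
point `α(s)` of `α`. -/
theorem strict_decrease_broken {n : ℕ} (R : RiemannianManifold n) (p q x₀ : R.M)
    (hx₀ : x₀ ∈ R.cutLocus p)
    (γ : ℝ → R.M) (hγ : R.IsMinGeodesic γ q x₀)
    (α : ℝ → R.M) (hα : R.IsMinGeodesic α p x₀)
    (hbroken : ¬ R.FormWholeGeodesic α γ (dist p x₀) (dist q x₀)) :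
    ∀ s ∈ Set.Ioo (0:ℝ) (dist p x₀),
      dist p (α s) + dist q (α s) < dist p x₀ + dist q x₀ :=
  strict_decrease_broken_general R p q x₀ γ hγ α hα hbroken
end
end
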